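/- c-concavity for Bregman costs is relative smoothness: let X = ℝ^d, let u : X → ℝ be strictly convex and twice differentiable with non-singular Hessian, and suppose ∇u : X → ℝ^d is surjective. Let c(x,y) = u(x|y) be the Bregman divergence cost on X × X, and let f : X → ℝ be twice differentiable. Then f is c-concave if and only if u − f is convex (i.e., f is smooth relative to u). -/

import Mathlib

open Set
open scoped RealInnerProductSpace

/-- Euclidean space `ℝ^d`. -/
abbrev Euc (d : ℕ) := EuclideanSpace ℝ (Fin d)

/-- The Bregman divergence `u(x'|x) = u(x') - u(x) - ⟪∇u(x), x' - x⟫`. -/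
noncomputable def breg {d : ℕ} (u : Euc d → ℝ) (x' x : Euc d) : ℝ :=
  u x' - u x - ⟪gradient u x, x' - x⟫

/-- The `c`-transform `f^c(y) = sup_x f(x) - c(x,y)`, valued in `EReal`. -/
noncomputable def cTransform {d : ℕ} (c : Euc d → Euc d → ℝ) (f : Euc d → ℝ)
    (y : Euc d) : EReal :=
  ⨆ x : Euc d, ((f x - c x y : ℝ) : EReal)

/-- `f` is `c`-concave: `f(x) = inf_y c(x,y) + f^c(y)` for all `x`. -/
def CConcave {d : ℕ} (c : Euc d → Euc d → ℝ) (f : Euc d → ℝ) : Prop :=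
  ∀ x : Euc d, (f x : EReal) = ⨅ y : Euc d, (((c x y : ℝ) : EReal) + cTransform c f y)

/-- Subgradient inequality for a convex differentiable function. -/
lemma subgrad {d : ℕ} {g : Euc d → ℝ} (hg : ConvexOn ℝ Set.univ g) {x w : Euc d}
    (hw : HasGradientAt g w x) (v : Euc d) : g x + ⟪w, v⟫ ≤ g (x + v) := by
  have hline : HasDerivAt (fun t : ℝ => x + t • v) v 0 := by
    simpa using ((hasDerivAt_id (0:ℝ)).smul_const v).const_add x
  have hφ : HasDerivAt (fun t : ℝ => g (x + t • v)) ⟪w, v⟫ 0 := by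
    have h0 : x + (0:ℝ) • v = x := by simp
    have hfd : HasFDerivAt g (InnerProductSpace.toDual ℝ (Euc d) w) (x + (0:ℝ) • v) := by
      rw [h0]; exact hw.hasFDerivAt
    have h2 := hfd.comp_hasDerivAt 0 hline
    simp only [InnerProductSpace.toDual_apply_apply] at h2; exact h2
  have hslope : Filter.Tendsto (slope (fun t : ℝ => g (x + t • v)) 0) (nhdsWithin 0 (Set.Ioi 0))
      (nhds ⟪w, v⟫) := by
    have := hasDerivAt_iff_tendsto_slope.mp hφ
    exact this.mono_left (nhdsWithin_mono _ (fun t ht => ne_of_gt ht))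
  have hbound : ∀ᶠ t in nhdsWithin (0:ℝ) (Set.Ioi 0),
      slope (fun t : ℝ => g (x + t • v)) 0 t ≤ g (x + v) - g x := by
    filter_upwards [Ioo_mem_nhdsGT_of_mem (by norm_num : (0:ℝ) ∈ Set.Ico (0:ℝ) 1)] with t ht
    have ht0 : 0 < t := ht.1
    have ht1 : t < 1 := ht.2
    have hconv := hg.2 (Set.mem_univ x) (Set.mem_univ (x + v))
        (by linarith : (0:ℝ) ≤ 1 - t) (le_of_lt ht0) (by ring)
    have heq : (1 - t) • x + t • (x + v) = x + t • v := by
      rw [smul_add, sub_smul, one_smul]; abel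
    rw [heq] at hconv
    rw [slope_def_field]
    have : (g (x + t • v) - g x) / t ≤ g (x + v) - g x := by
      rw [div_le_iff₀ ht0]
      simp only [smul_eq_mul] at hconv
      nlinarith
    simpa [div_eq_inv_mul] using this
  have hle : ⟪w, v⟫ ≤ g (x + v) - g x := le_of_tendsto hslope hbound
  linarith

/-- **c-concavity for Bregman costs is relative smoothness.**
Let `u : ℝ^d → ℝ` be strictly convex, twice differentiable with non-singular
Hessian, with surjective gradient, let `c(x,y) = u(x|y)` be the Bregman
divergence cost, and let `f` be twice differentiable. Then `f` is `c`-concave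
iff `u - f` is convex (i.e. `f` is smooth relative to `u`). -/
theorem bregman_c_concavity_iff_relative_smoothness {d : ℕ}
    (u f : Euc d → ℝ)
    (hu_strict : StrictConvexOn ℝ Set.univ u)
    (hu_smooth : ContDiff ℝ 2 u)
    (hu_hess : ∀ x, Function.Bijective (fderiv ℝ (gradient u) x))
    (hu_surj : Function.Surjective (gradient u))
    (hf : ContDiff ℝ 2 f)
    (c : Euc d → Euc d → ℝ)
    (hc : c = fun x y => breg u x y) :
    CConcave c f ↔ ConvexOn ℝ Set.univ (fun x => u x - f x) := by
  subst hc
  have hud : Differentiable ℝ u := hu_smooth.differentiable (by norm_num)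
  have hfd : Differentiable ℝ f := hf.differentiable (by norm_num)
  constructor
  · -- c-concave → convex
    intro hcc
    refine ⟨convex_univ, ?_⟩
    intro x₁ _ x₂ _ a b ha hb hab
    simp only [smul_eq_mul]
    set xt := a • x₁ + b • x₂ with hxt
    refine le_of_forall_pos_le_add ?_
    intro ε hε
    have hlt : (⨅ y : Euc d, (((fun x y => breg u x y) xt y : ℝ) : EReal)
        + cTransform (fun x y => breg u x y) f y) < ((f xt + ε : ℝ) : EReal) := by
      rw [← hcc xt]
      exact_mod_cast (by linarith : f xt < f xt + ε)
    obtain ⟨y, hy⟩ := iInf_lt_iff.mp hlt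
    set T := cTransform (fun x y => breg u x y) f y with hT
    have hTge : ∀ z : Euc d, ((f z - breg u z y : ℝ) : EReal) ≤ T := fun z =>
      le_iSup (fun z : Euc d => ((f z - breg u z y : ℝ) : EReal)) z
    have hbot : T ≠ ⊥ := fun h => by
      have := hTge y; rw [h] at this; exact (EReal.coe_ne_bot _) (le_bot_iff.mp this)
    have htop : T ≠ ⊤ := by
      intro h
      rw [h, EReal.coe_add_top] at hy
      exact (not_top_lt hy)
    set r := T.toReal with hr
    have hTr : T = (r : EReal) := (EReal.coe_toReal htop hbot).symm
    rw [hTr, ← EReal.coe_add] at hy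
    have hy' : breg u xt y + r < f xt + ε := EReal.coe_lt_coe_iff.mp hy
    have key : ∀ z : Euc d, f z - breg u z y ≤ r := fun z => by
      have := hTge z; rw [hTr] at this; exact_mod_cast this
    have h1 := key x₁
    have h2 := key x₂
    have hysum : a • y + b • y = y := by rw [← add_smul, hab, one_smul]
    have hxty : xt - y = a • (x₁ - y) + b • (x₂ - y) := by
      have h' : a • (x₁ - y) + b • (x₂ - y) = (a • x₁ + b • x₂) - (a • y + b • y) := by
        rw [smul_sub, smul_sub]; abel
      rw [hxt, h', hysum]
    have hlin : ⟪gradient u y, xt - y⟫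
        = a * ⟪gradient u y, x₁ - y⟫ + b * ⟪gradient u y, x₂ - y⟫ := by
      rw [hxty, inner_add_right, real_inner_smul_right, real_inner_smul_right]
    have hA : a * (u y + ⟪gradient u y, x₁ - y⟫ - r) ≤ a * (u x₁ - f x₁) := by
      apply mul_le_mul_of_nonneg_left _ ha
      simp only [breg] at h1; linarith
    have hB : b * (u y + ⟪gradient u y, x₂ - y⟫ - r) ≤ b * (u x₂ - f x₂) := by
      apply mul_le_mul_of_nonneg_left _ hb
      simp only [breg] at h2; linarith
    have huy : u y = a * u y + b * u y := by rw [← add_mul, hab, one_mul]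
    have hry : r = a * r + b * r := by rw [← add_mul, hab, one_mul]
    simp only [breg] at hy'
    nlinarith [hy', hA, hB, hlin, huy, hry]
  · -- convex → c-concave
    intro hconv
    intro x
    have hgrad : HasGradientAt (fun z => u z - f z) (gradient u x - gradient f x) x := by
      rw [hasGradientAt_iff_hasFDerivAt]
      have h := ((hud x).hasFDerivAt).sub ((hfd x).hasFDerivAt)
      have hgu : InnerProductSpace.toDual ℝ (Euc d) (gradient u x) = fderiv ℝ u x := by
        rw [gradient, LinearIsometryEquiv.apply_symm_apply]
      have hgf : InnerProductSpace.toDual ℝ (Euc d) (gradient f x) = fderiv ℝ f x := by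
        rw [gradient, LinearIsometryEquiv.apply_symm_apply]
      rw [map_sub, hgu, hgf]
      exact h
    obtain ⟨y, hy⟩ := hu_surj (gradient u x - gradient f x)
    have hkey : ∀ z : Euc d, f z - breg u z y ≤ f x - breg u x y := by
      intro z
      have hs := subgrad hconv hgrad (z - x)
      rw [show x + (z - x) = z by abel, ← hy] at hs
      have hinner : ⟪gradient u y, z - y⟫ - ⟪gradient u y, x - y⟫ = ⟪gradient u y, z - x⟫ := by
        rw [← inner_sub_right]; congr 1; abel
      simp only [breg]
      linarith
    have hCT : cTransform (fun x y => breg u x y) f y = ((f x - breg u x y : ℝ) : EReal) :=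
      le_antisymm (iSup_le fun z => EReal.coe_le_coe_iff.mpr (hkey z))
        (le_iSup (fun z : Euc d => ((f z - breg u z y : ℝ) : EReal)) x)
    apply le_antisymm
    · refine le_iInf fun y' => ?_
      have h1 : ((f x - breg u x y' : ℝ) : EReal) ≤ cTransform (fun x y => breg u x y) f y' :=
        le_iSup (fun z : Euc d => ((f z - breg u z y' : ℝ) : EReal)) x
      calc (f x : EReal) = ((breg u x y' + (f x - breg u x y') : ℝ) : EReal) := by norm_num
        _ = ((breg u x y' : ℝ) : EReal) + ((f x - breg u x y' : ℝ) : EReal) := EReal.coe_add _ _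
        _ ≤ _ := add_le_add_right h1 _
    · calc (⨅ y' : Euc d, (((fun x y => breg u x y) x y' : ℝ) : EReal)
            + cTransform (fun x y => breg u x y) f y')
          ≤ ((breg u x y : ℝ) : EReal) + cTransform (fun x y => breg u x y) f y := iInf_le _ y
        _ = (f x : EReal) := by rw [hCT, ← EReal.coe_add]; norm_num
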